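/- Let f : M_{d_L×d_0}(ℝ) → ℝ be convex and differentiable and suppose every hidden dimension satisfies d_ℓ ≥ min{d_0, d_L} for ℓ = 1,...,L−1. Then every local minimizer of F(W_1,...,W_L) = f(W_L ··· W_1) is a global minimizer of F. -/

import Mathlib

open Matrix

/-- Frobenius norm of a real matrix. -/
noncomputable def frob {m n : ℕ} (A : Matrix (Fin m) (Fin n) ℝ) : ℝ :=
  Real.sqrt (∑ i, ∑ j, (A i j)^2)

/-- `prodUpTo d k W = W (k-1) * ⋯ * W 1 * W 0`, the product of the first `k` layer
matrices: in the paper's 1-indexed notation this is the truncated product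
`W_{k,-} = W_k ⋯ W_1`, and `prodUpTo d L W = W_L ⋯ W_1` is the full network product. -/
noncomputable def prodUpTo (d : ℕ → ℕ) : (k : ℕ) →
    ((j : ℕ) → Matrix (Fin (d (j+1))) (Fin (d j)) ℝ) → Matrix (Fin (d k)) (Fin (d 0)) ℝ
  | 0, _ => 1
  | k+1, W => W k * prodUpTo d k W

/-- `G` is the gradient of `f` at `A`:  `f (A+H) = f A + ⟨G, H⟩_fro + o(‖H‖_fro)`,
where `⟨G, H⟩_fro = Tr (Gᵀ H)` is the Frobenius inner product. -/
def HasGradAt {m n : ℕ} (f : Matrix (Fin m) (Fin n) ℝ → ℝ)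
    (A G : Matrix (Fin m) (Fin n) ℝ) : Prop :=
  ∀ ε > (0:ℝ), ∃ δ > (0:ℝ), ∀ H : Matrix (Fin m) (Fin n) ℝ,
    frob H ≤ δ → |f (A + H) - f A - (Gᵀ * H).trace| ≤ ε * frob H


namespace Stmt7Aux


variable {m n a b c e : ℕ}

lemma frob_nonneg (A : Matrix (Fin m) (Fin n) ℝ) : 0 ≤ frob A := Real.sqrt_nonneg _

lemma frob_zero : frob (0 : Matrix (Fin m) (Fin n) ℝ) = 0 := by simp [frob]

lemma frob_smul (c : ℝ) (A : Matrix (Fin m) (Fin n) ℝ) : frob (c • A) = |c| * frob A := by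
  have h : ∑ i, ∑ j, ((c • A) i j)^2 = c^2 * ∑ i, ∑ j, (A i j)^2 := by
    simp [Finset.mul_sum, mul_pow]
  rw [frob, frob, h, Real.sqrt_mul (sq_nonneg c), Real.sqrt_sq_eq_abs]

lemma frob_eq_norm (A : Matrix (Fin m) (Fin n) ℝ) :
    frob A = ‖(show EuclideanSpace ℝ (Fin m × Fin n) from WithLp.toLp 2 (fun p : Fin m × Fin n => A p.1 p.2))‖ := by
  rw [EuclideanSpace.norm_eq]
  simp [frob, Fintype.sum_prod_type, Real.norm_eq_abs, sq_abs, PiLp.toLp_apply]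

lemma frob_add_le (A B : Matrix (Fin m) (Fin n) ℝ) : frob (A + B) ≤ frob A + frob B := by
  rw [frob_eq_norm, frob_eq_norm, frob_eq_norm]
  exact norm_add_le (E := EuclideanSpace ℝ (Fin m × Fin n))
    (WithLp.toLp 2 (fun p : Fin m × Fin n => A p.1 p.2)) (WithLp.toLp 2 (fun p : Fin m × Fin n => B p.1 p.2))



variable {m n a b c e : ℕ}

lemma mul_vecMulVec (M : Matrix (Fin a) (Fin b) ℝ) (y : Fin b → ℝ) (u : Fin c → ℝ) :
    M * vecMulVec y u = vecMulVec (M *ᵥ y) u := by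
  ext i j
  simp [Matrix.mul_apply, vecMulVec_apply, Matrix.mulVec, dotProduct,
    Finset.sum_mul, mul_assoc]

lemma vecMulVec_mul (u : Fin a → ℝ) (z : Fin b → ℝ) (M : Matrix (Fin b) (Fin c) ℝ) :
    vecMulVec u z * M = vecMulVec u (z ᵥ* M) := by
  ext i j
  simp [Matrix.mul_apply, vecMulVec_apply, Matrix.vecMul, dotProduct,
    Finset.mul_sum, mul_assoc]

lemma vecMulVec_zero_left (z : Fin b → ℝ) : vecMulVec (0 : Fin a → ℝ) z = 0 := by
  ext i j; simp [vecMulVec_apply]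

lemma vecMulVec_zero_right (u : Fin a → ℝ) : vecMulVec u (0 : Fin b → ℝ) = 0 := by
  ext i j; simp [vecMulVec_apply]

lemma vecMulVec_smul_left (c' : ℝ) (u : Fin a → ℝ) (z : Fin b → ℝ) :
    vecMulVec (c' • u) z = c' • vecMulVec u z := by
  ext i j; simp [vecMulVec_apply, mul_assoc]

lemma vecMulVec_smul_right (c' : ℝ) (u : Fin a → ℝ) (z : Fin b → ℝ) :
    vecMulVec u (c' • z) = c' • vecMulVec u z := by
  ext i j; simp [vecMulVec_apply]; ring

lemma left_eq_zero_of_vecMulVec {u : Fin a → ℝ} {z : Fin b → ℝ}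
    (h : vecMulVec u z = 0) (hz : z ≠ 0) : u = 0 := by
  obtain ⟨q, hq⟩ := Function.ne_iff.mp hz
  funext p
  have := congrFun (congrFun h p) q
  simp only [vecMulVec_apply, Matrix.zero_apply] at this
  rcases mul_eq_zero.mp this with h'|h'
  · exact h'
  · exact absurd h' hq

lemma right_eq_zero_of_vecMulVec {u : Fin a → ℝ} {z : Fin b → ℝ}
    (h : vecMulVec u z = 0) (hu : u ≠ 0) : z = 0 := by
  obtain ⟨p, hp⟩ := Function.ne_iff.mp hu
  funext q
  have := congrFun (congrFun h p) q
  simp only [vecMulVec_apply, Matrix.zero_apply] at this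
  rcases mul_eq_zero.mp this with h'|h'
  · exact absurd h' hp
  · exact h'

lemma eq_zero_of_mulVec {M : Matrix (Fin a) (Fin b) ℝ}
    (h : ∀ v : Fin b → ℝ, M *ᵥ v = 0) : M = 0 := by
  ext i j
  have := congrFun (h (Pi.single j 1)) i
  simpa [Matrix.mulVec, dotProduct, Pi.single_apply, mul_ite,
    Finset.sum_ite_eq'] using this

lemma eq_zero_of_vecMul {M : Matrix (Fin a) (Fin b) ℝ}
    (h : ∀ v : Fin a → ℝ, v ᵥ* M = 0) : M = 0 := by
  ext i j
  have := congrFun (h (Pi.single i 1)) j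
  simpa [Matrix.vecMul, dotProduct, Pi.single_apply, ite_mul,
    Finset.sum_ite_eq] using this

lemma eq_zero_of_trace_mul_transpose {N : Matrix (Fin a) (Fin b) ℝ}
    (h : (N * Nᵀ).trace = 0) : N = 0 := by
  have h' : ∑ i, ∑ j, (N i j)^2 = 0 := by
    rw [← h]; simp [Matrix.trace, Matrix.diag, Matrix.mul_apply, sq]
  ext i j
  have hi := (Finset.sum_eq_zero_iff_of_nonneg (fun i _ => Finset.sum_nonneg
    (fun j _ => sq_nonneg (N i j)))).mp h' i (Finset.mem_univ i)
  have hij := (Finset.sum_eq_zero_iff_of_nonneg (fun j _ => sq_nonneg (N i j))).mp hi j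
    (Finset.mem_univ j)
  exact pow_eq_zero_iff (n := 2) (by norm_num) |>.mp hij

lemma quad_zero (Gt : Matrix (Fin a) (Fin b) ℝ) (P : Matrix (Fin b) (Fin c) ℝ)
    (Q : Matrix (Fin e) (Fin a) ℝ)
    (h : ∀ Δ : Matrix (Fin c) (Fin e) ℝ, (Gt * (P * Δ * Q)).trace = 0) :
    Q * Gt * P = 0 := by
  have h2 := h (Q * Gt * P)ᵀ
  have key : ∀ Δ : Matrix (Fin c) (Fin e) ℝ,
      (Gt * (P * Δ * Q)).trace = ((Q * Gt * P) * Δ).trace := by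
    intro Δ
    have e1 : Gt * (P * Δ * Q) = (Gt * P * Δ) * Q := by
      simp only [Matrix.mul_assoc]
    have e2 : Q * (Gt * P * Δ) = (Q * Gt * P) * Δ := by
      simp only [Matrix.mul_assoc]
    rw [e1, Matrix.trace_mul_comm, e2]
  rw [key] at h2
  exact eq_zero_of_trace_mul_transpose h2

/-- rows of `B` independent implies left cancellation -/
lemma cancel_of_rows_indep {k n' m' : ℕ} (B : Matrix (Fin k) (Fin n') ℝ)
    (hB : ∀ z : Fin k → ℝ, z ᵥ* B = 0 → z = 0) (hkn : n' ≤ k)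
    (M : Matrix (Fin n') (Fin m') ℝ) (h : B * M = 0) : M = 0 := by
  have li : LinearIndependent ℝ (fun i => B i) := by
    rw [Fintype.linearIndependent_iff]
    intro g hg i
    have : g ᵥ* B = 0 := by
      funext j
      have := congrFun hg j
      simpa [Matrix.vecMul, dotProduct, Finset.sum_apply] using this
    exact congrFun (hB g this) i
  have hcard : k ≤ n' := by
    have := li.fintype_card_le_finrank
    simpa [Module.finrank_pi] using this
  have hkeq : k = n' := le_antisymm hcard hkn
  have hspan : Submodule.span ℝ (Set.range fun i => B i) = ⊤ := by
    apply li.span_eq_top_of_card_eq_finrank'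
    simp [Module.finrank_pi, hkeq]
  ext j q
  have hcol : ∀ p, B p ⬝ᵥ (fun r => M r q) = 0 := by
    intro p
    have := congrFun (congrFun h p) q
    simpa [Matrix.mul_apply, dotProduct] using this
  set v : Fin n' → ℝ := fun r => M r q with hv
  let φ : (Fin n' → ℝ) →ₗ[ℝ] ℝ :=
    { toFun := fun x => x ⬝ᵥ v
      map_add' := fun x y => add_dotProduct x y v
      map_smul' := fun c x => smul_dotProduct c x v }
  have hker : Submodule.span ℝ (Set.range fun i => B i) ≤ LinearMap.ker φ := by
    rw [Submodule.span_le]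
    rintro x ⟨p, rfl⟩
    simpa [φ, LinearMap.mem_ker] using hcol p
  have hv0 : v ⬝ᵥ v = 0 := by
    have : v ∈ LinearMap.ker φ := hker (hspan ▸ Submodule.mem_top)
    simpa [φ, LinearMap.mem_ker] using this
  have : v = 0 := dotProduct_self_eq_zero.mp hv0
  exact congrFun this j

lemma card_le_of_rows_indep {k n' : ℕ} (B : Matrix (Fin k) (Fin n') ℝ)
    (hB : ∀ z : Fin k → ℝ, z ᵥ* B = 0 → z = 0) : k ≤ n' := by
  have li : LinearIndependent ℝ (fun i => B i) := by
    rw [Fintype.linearIndependent_iff]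
    intro g hg i
    have : g ᵥ* B = 0 := by
      funext j
      have := congrFun hg j
      simpa [Matrix.vecMul, dotProduct, Finset.sum_apply] using this
    exact congrFun (hB g this) i
  have := li.fintype_card_le_finrank
  simpa [Module.finrank_pi] using this

lemma cancel_of_cols_indep {k n' m' : ℕ} (A : Matrix (Fin k) (Fin n') ℝ)
    (hA : ∀ y : Fin n' → ℝ, A *ᵥ y = 0 → y = 0) (hkn : k ≤ n')
    (M : Matrix (Fin m') (Fin k) ℝ) (h : M * A = 0) : M = 0 := by
  have hB : ∀ z : Fin n' → ℝ, z ᵥ* Aᵀ = 0 → z = 0 := by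
    intro z hz
    exact hA z (by rwa [Matrix.vecMul_transpose] at hz)
  have h' : Aᵀ * Mᵀ = 0 := by
    rw [← Matrix.transpose_mul, h, Matrix.transpose_zero]
  have := cancel_of_rows_indep Aᵀ hB hkn Mᵀ h'
  exact Matrix.transpose_eq_zero.mp this

lemma card_le_of_cols_indep {k n' : ℕ} (A : Matrix (Fin k) (Fin n') ℝ)
    (hA : ∀ y : Fin n' → ℝ, A *ᵥ y = 0 → y = 0) : n' ≤ k := by
  apply card_le_of_rows_indep Aᵀ
  intro z hz
  exact hA z (by rwa [Matrix.vecMul_transpose] at hz)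



noncomputable def prodSeg (d : ℕ → ℕ) (a : ℕ) :
    (b : ℕ) → ((j : ℕ) → Matrix (Fin (d (j+1))) (Fin (d j)) ℝ) →
      Matrix (Fin (d b)) (Fin (d a)) ℝ
  | 0, _ => if h : a = 0 then cast (by rw [h]) (1 : Matrix (Fin (d a)) (Fin (d a)) ℝ) else 0
  | b+1, W => if h : a = b+1 then cast (by rw [h]) (1 : Matrix (Fin (d a)) (Fin (d a)) ℝ)
      else W b * prodSeg d a b W

variable {d : ℕ → ℕ} {W W' : (j : ℕ) → Matrix (Fin (d (j+1))) (Fin (d j)) ℝ}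

lemma prodSeg_self (a : ℕ) : prodSeg d a a W = 1 := by
  cases a <;> simp [prodSeg]

lemma prodSeg_succ {a b : ℕ} (h : a ≤ b) :
    prodSeg d a (b+1) W = W b * prodSeg d a b W := by
  rw [prodSeg, dif_neg (by omega)]

lemma prodSeg_split {a b c : ℕ} (hab : a ≤ b) (hbc : b ≤ c) :
    prodSeg d a c W = prodSeg d b c W * prodSeg d a b W := by
  induction c, hbc using Nat.le_induction with
  | base => rw [prodSeg_self, Matrix.one_mul]
  | succ c hbc ih =>
      rw [prodSeg_succ (hab.trans hbc), prodSeg_succ hbc, ih, Matrix.mul_assoc]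

lemma prodSeg_congr {a b : ℕ} (hab : a ≤ b)
    (h : ∀ j, a ≤ j → j < b → W j = W' j) : prodSeg d a b W = prodSeg d a b W' := by
  induction b, hab using Nat.le_induction with
  | base => rw [prodSeg_self, prodSeg_self]
  | succ b hab ih =>
      rw [prodSeg_succ hab, prodSeg_succ hab, h b hab (by omega),
        ih (fun j hj hj' => h j hj (by omega))]

lemma prodSeg_single (a : ℕ) : prodSeg d a (a+1) W = W a := by
  rw [prodSeg_succ le_rfl, prodSeg_self, Matrix.mul_one]

lemma prodSeg_succ_left {a b : ℕ} (hab : a < b) :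
    prodSeg d a b W = prodSeg d (a+1) b W * W a := by
  induction b, hab using Nat.le_induction with
  | base => rw [prodSeg_single, prodSeg_self, Matrix.one_mul]
  | succ b hab ih =>
      rw [prodSeg_succ (by omega), prodSeg_succ (by omega), ih, Matrix.mul_assoc]

lemma prodUpTo_eq (k : ℕ) : prodUpTo d k W = prodSeg d 0 k W := by
  induction k with
  | zero => rw [prodUpTo, prodSeg_self]
  | succ k ih => rw [prodUpTo, prodSeg_succ (Nat.zero_le _), ih]



variable {m n : ℕ}

lemma deriv_zero {f : Matrix (Fin m) (Fin n) ℝ → ℝ} {A G : Matrix (Fin m) (Fin n) ℝ}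
    (hG : HasGradAt f A G) (N : Matrix (Fin m) (Fin n) ℝ) {t₀ : ℝ} (ht₀ : 0 < t₀)
    (h : ∀ t : ℝ, |t| ≤ t₀ → f A ≤ f (A + t • N)) : (Gᵀ * N).trace = 0 := by
  set T : ℝ := (Gᵀ * N).trace with hT
  have key : ∀ ε > (0:ℝ), |T| ≤ ε * frob N := by
    intro ε hε
    obtain ⟨δ, hδ, hgrad⟩ := hG ε hε
    set t : ℝ := min t₀ (δ / (frob N + 1)) with ht
    have hN1 : 0 < frob N + 1 := by have := frob_nonneg N; linarith
    have htpos : 0 < t := lt_min ht₀ (div_pos hδ hN1)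
    have hfr : ∀ s : ℝ, |s| ≤ t → frob (s • N) ≤ δ := by
      intro s hs
      rw [frob_smul]
      calc |s| * frob N ≤ t * frob N := by
            apply mul_le_mul_of_nonneg_right hs (frob_nonneg N)
        _ ≤ (δ / (frob N + 1)) * frob N := by
            apply mul_le_mul_of_nonneg_right (min_le_right _ _) (frob_nonneg N)
        _ ≤ δ := by
            rw [div_mul_eq_mul_div, div_le_iff₀ hN1]
            nlinarith [frob_nonneg N]
    have htrace : ∀ s : ℝ, (Gᵀ * (s • N)).trace = s * T := by
      intro s
      rw [hT, Matrix.mul_smul, Matrix.trace_smul]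
      simp
    have hboth : ∀ s : ℝ, |s| ≤ t → 0 ≤ s * T + ε * (|s| * frob N) := by
      intro s hs
      have h1 := hgrad (s • N) (hfr s hs)
      rw [htrace, frob_smul] at h1
      have h2 := h s (le_trans hs (min_le_left _ _))
      have := abs_le.mp h1
      linarith [this.1, this.2]
    have hp := hboth t (by rw [abs_of_pos htpos])
    have hm := hboth (-t) (by rw [abs_neg, abs_of_pos htpos])
    rw [abs_of_pos htpos] at hp
    rw [abs_neg, abs_of_pos htpos] at hm
    rw [abs_le]
    constructor
    · nlinarith
    · nlinarith
  by_contra hTne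
  have hT0 : 0 < |T| := abs_pos.mpr hTne
  have hN1 : 0 < frob N + 1 := by have := frob_nonneg N; linarith
  have := key (|T| / (2 * (frob N + 1))) (by positivity)
  have hlt : |T| / (2 * (frob N + 1)) * frob N < |T| := by
    rw [div_mul_eq_mul_div, div_lt_iff₀ (by positivity)]
    nlinarith [frob_nonneg N]
  linarith

lemma global_of_grad_zero {f : Matrix (Fin m) (Fin n) ℝ → ℝ}
    (hconv : ConvexOn ℝ Set.univ f) {Ahat : Matrix (Fin m) (Fin n) ℝ}
    (hgrad : HasGradAt f Ahat 0) (C : Matrix (Fin m) (Fin n) ℝ) : f Ahat ≤ f C := by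
  set D : Matrix (Fin m) (Fin n) ℝ := C - Ahat with hD
  have key : ∀ ε > (0:ℝ), f Ahat - f C ≤ ε * frob D := by
    intro ε hε
    obtain ⟨δ, hδ, hgrad'⟩ := hgrad ε hε
    have hD1 : 0 < frob D + 1 := by have := frob_nonneg D; linarith
    set t : ℝ := min 1 (δ / (frob D + 1)) with ht
    have htpos : 0 < t := lt_min one_pos (div_pos hδ hD1)
    have ht1 : t ≤ 1 := min_le_left _ _
    have hfr : frob (t • D) ≤ δ := by
      rw [frob_smul, abs_of_pos htpos]
      calc t * frob D ≤ (δ / (frob D + 1)) * frob D := by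
            apply mul_le_mul_of_nonneg_right (min_le_right _ _) (frob_nonneg D)
        _ ≤ δ := by
            rw [div_mul_eq_mul_div, div_le_iff₀ hD1]
            nlinarith [frob_nonneg D]
    have h1 := hgrad' (t • D) hfr
    have htr : ((0 : Matrix (Fin m) (Fin n) ℝ)ᵀ * (t • D)).trace = 0 := by simp
    rw [htr] at h1
    have h1' := (abs_le.mp h1).1
    rw [frob_smul, abs_of_pos htpos] at h1'
    -- convexity
    have hcvx := hconv.2 (Set.mem_univ Ahat) (Set.mem_univ C)
      (by linarith : (0:ℝ) ≤ 1 - t) (le_of_lt htpos) (by ring)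
    have heq : (1 - t) • Ahat + t • C = Ahat + t • D := by
      rw [hD]; module
    rw [heq] at hcvx
    -- f (Ahat + t•D) ≥ f Ahat - ε * (t * frob D)
    have hlow : f Ahat - ε * (t * frob D) ≤ f (Ahat + t • D) := by linarith
    have : f Ahat - ε * (t * frob D) ≤ (1 - t) * f Ahat + t * f C := le_trans hlow hcvx
    have h2 : t * (f Ahat - f C) ≤ ε * (t * frob D) := by nlinarith
    have h3 : f Ahat - f C ≤ ε * frob D := by
      have := (mul_le_mul_iff_right₀ htpos).mp (by linarith [h2] : t * (f Ahat - f C) ≤ t * (ε * frob D))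
      linarith
    exact h3
  by_contra hlt
  push_neg at hlt
  have hpos : 0 < f Ahat - f C := by linarith
  have hD1 : 0 < frob D + 1 := by have := frob_nonneg D; linarith
  have := key ((f Ahat - f C) / (2 * (frob D + 1))) (by positivity)
  have : (f Ahat - f C) / (2 * (frob D + 1)) * frob D < f Ahat - f C := by
    rw [div_mul_eq_mul_div, div_lt_iff₀ (by positivity)]
    nlinarith [frob_nonneg D]
  linarith [key ((f Ahat - f C) / (2 * (frob D + 1))) (by positivity)]


lemma fo_main {L : ℕ} {d : ℕ → ℕ} {f : Matrix (Fin (d L)) (Fin (d 0)) ℝ → ℝ}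
    {G : Matrix (Fin (d L)) (Fin (d 0)) ℝ → Matrix (Fin (d L)) (Fin (d 0)) ℝ}
    (hf : ∀ A, HasGradAt f A (G A))
    {What : (j : ℕ) → Matrix (Fin (d (j+1))) (Fin (d j)) ℝ} {ε : ℝ} (hε : 0 < ε)
    (hm : ∀ W, (∀ j < L, frob (W j - What j) ≤ ε) →
      f (prodSeg d 0 L What) ≤ f (prodSeg d 0 L W))
    (W' : (j : ℕ) → Matrix (Fin (d (j+1))) (Fin (d j)) ℝ)
    (hW' : ∀ j < L, frob (W' j - What j) ≤ ε/2)
    (hprod : prodSeg d 0 L W' = prodSeg d 0 L What)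
    (k : ℕ) (hk : k < L) :
    prodSeg d 0 k W' * (G (prodSeg d 0 L What))ᵀ * prodSeg d (k+1) L W' = 0 := by
  apply quad_zero
  intro Δ
  have hΔ1 : 0 < frob Δ + 1 := by have := frob_nonneg Δ; linarith
  have ht₀pos : 0 < ε / (2 * (frob Δ + 1)) := by positivity
  apply deriv_zero (hf (prodSeg d 0 L What)) _ ht₀pos
  intro t ht
  have hdecomp : ∀ V : (j : ℕ) → Matrix (Fin (d (j+1))) (Fin (d j)) ℝ,
      prodSeg d 0 L V = prodSeg d (k+1) L V * (V k * prodSeg d 0 k V) := by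
    intro V
    rw [prodSeg_split (Nat.zero_le (k+1)) (show k+1 ≤ L by omega),
      prodSeg_succ (Nat.zero_le _)]
  set W2 := Function.update W' k (W' k + t • Δ) with hW2
  have hc1 : prodSeg d (k+1) L W2 = prodSeg d (k+1) L W' :=
    prodSeg_congr (by omega) (fun j hj1 hj2 => Function.update_of_ne (by omega) _ _)
  have hc2 : prodSeg d 0 k W2 = prodSeg d 0 k W' :=
    prodSeg_congr (Nat.zero_le _) (fun j hj1 hj2 => Function.update_of_ne (by omega) _ _)
  have hk2 : W2 k = W' k + t • Δ := Function.update_self _ _ _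
  have hprod2 : prodSeg d 0 L W2 = prodSeg d 0 L What
      + t • (prodSeg d (k+1) L W' * Δ * prodSeg d 0 k W') := by
    rw [hdecomp W2, hc1, hc2, hk2, ← hprod, hdecomp W']
    rw [Matrix.add_mul, Matrix.smul_mul, Matrix.mul_add, Matrix.mul_smul]
    simp only [Matrix.mul_assoc]
  have hball : ∀ j < L, frob (W2 j - What j) ≤ ε := by
    intro j hj
    by_cases hjk : j = k
    · subst hjk
      rw [hW2, Function.update_self]
      have hre : W' j + t • Δ - What j = (W' j - What j) + t • Δ := by
        abel
      rw [hre]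
      have h1 := frob_add_le (W' j - What j) (t • Δ)
      have h2 := hW' j hj
      rw [frob_smul] at h1
      have h3 : |t| * frob Δ ≤ ε/2 := by
        calc |t| * frob Δ ≤ (ε / (2*(frob Δ + 1))) * frob Δ :=
              mul_le_mul_of_nonneg_right ht (frob_nonneg Δ)
          _ ≤ ε/2 := by
              rw [div_mul_eq_mul_div, div_le_iff₀ (by positivity)]
              nlinarith [frob_nonneg Δ]
      linarith
    · rw [hW2, Function.update_of_ne hjk]
      linarith [hW' j hj]
  have hfin := hm W2 hball
  rwa [hprod2] at hfin


end Stmt7Aux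

open Stmt7Aux

/-- Theorem 1: if `f` is convex and differentiable and every hidden dimension satisfies
`d_ℓ ≥ min{d_0, d_L}`, then every local minimizer of `F(W_1,...,W_L) = f(W_L ... W_1)`
is a global minimizer of `F`. -/
theorem stmt7 (L : ℕ) (hL : 1 ≤ L) (d : ℕ → ℕ)
    (hstruct : ∀ ℓ, 1 ≤ ℓ → ℓ < L → min (d 0) (d L) ≤ d ℓ)
    (f : Matrix (Fin (d L)) (Fin (d 0)) ℝ → ℝ)
    (hconv : ConvexOn ℝ Set.univ f)
    (G : Matrix (Fin (d L)) (Fin (d 0)) ℝ → Matrix (Fin (d L)) (Fin (d 0)) ℝ)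
    (hf : ∀ A, HasGradAt f A (G A))
    (What : (j : ℕ) → Matrix (Fin (d (j+1))) (Fin (d j)) ℝ)
    (hmin : ∃ ε > (0:ℝ), ∀ W, (∀ j < L, frob (W j - What j) ≤ ε) →
      f (prodUpTo d L W) ≥ f (prodUpTo d L What)) :
    ∀ W, f (prodUpTo d L What) ≤ f (prodUpTo d L W) := by
  classical
  obtain ⟨ε, hε, hminε⟩ := hmin
  have hm : ∀ W, (∀ j < L, frob (W j - What j) ≤ ε) →
      f (prodSeg d 0 L What) ≤ f (prodSeg d 0 L W) := by
    intro W hW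
    have h := hminε W hW
    rwa [prodUpTo_eq, prodUpTo_eq] at h
  have hG0 : G (prodSeg d 0 L What) = 0 := by
    by_cases hcase : d 0 ≤ d L
    · -- Case 1 : use bottom partial products
      set Pred : ℕ → Prop :=
        fun k => ∀ z : Fin (d k) → ℝ, z ᵥ* prodSeg d 0 k What = 0 → z = 0 with hPreddef
      have hP0 : Pred 0 := by
        intro z hz
        rwa [prodSeg_self, Matrix.vecMul_one] at hz
      set ks := Nat.findGreatest Pred (L - 1) with hksdef
      have hPks : Pred ks := Nat.findGreatest_spec (Nat.zero_le _) hP0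
      have hksL : ks < L := by
        have h1 : ks ≤ L - 1 := Nat.findGreatest_le _
        omega
      have zex : ∀ j, ks + 1 ≤ j → j + 1 ≤ L →
          ∃ v : Fin (d j) → ℝ, v ᵥ* prodSeg d 0 j What = 0 ∧ v ≠ 0 := by
        intro j h1 h2
        have hnP : ¬ Pred j := by
          have hgt : ks < j := by omega
          have hle : j ≤ L - 1 := by omega
          rw [hksdef] at hgt
          exact Nat.findGreatest_is_greatest hgt hle
        simp only [hPreddef] at hnP
        push_neg at hnP
        exact hnP
      set z : (j : ℕ) → Fin (d j) → ℝ := fun j =>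
        if h : ks + 1 ≤ j ∧ j + 1 ≤ L then (zex j h.1 h.2).choose else 0 with hzdef
      have hz : ∀ j, ks + 1 ≤ j → j + 1 ≤ L →
          z j ᵥ* prodSeg d 0 j What = 0 ∧ z j ≠ 0 := by
        intro j h1 h2
        rw [hzdef]
        simp only [dif_pos (And.intro h1 h2)]
        exact (zex j h1 h2).choose_spec
      set Wp : ((i : ℕ) → Fin (d (i+1)) → ℝ) →
          (j : ℕ) → Matrix (Fin (d (j+1))) (Fin (d j)) ℝ :=
        fun u j => if ks + 1 ≤ j ∧ j + 1 ≤ L then What j + Matrix.vecMulVec (u j) (z j)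
          else What j with hWpdef
      have hWpkeep : ∀ u mm, prodSeg d 0 mm (Wp u) = prodSeg d 0 mm What := by
        intro u mm
        induction mm with
        | zero => rw [prodSeg_self, prodSeg_self]
        | succ mm ih =>
            rw [prodSeg_succ (Nat.zero_le _), prodSeg_succ (Nat.zero_le _), ih]
            have hWpmm : Wp u mm = if ks + 1 ≤ mm ∧ mm + 1 ≤ L
                then What mm + Matrix.vecMulVec (u mm) (z mm) else What mm := by
              rw [hWpdef]
            rw [hWpmm]
            by_cases hc : ks + 1 ≤ mm ∧ mm + 1 ≤ L
            · rw [if_pos hc, Matrix.add_mul, vecMulVec_mul, (hz mm hc.1 hc.2).1,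
                vecMulVec_zero_right, add_zero]
            · rw [if_neg hc]
      have hball : ∀ u, (∀ i, frob (Matrix.vecMulVec (u i) (z i)) ≤ ε/2) →
          ∀ j, j < L → frob (Wp u j - What j) ≤ ε/2 := by
        intro u hu j hj
        have hWpj : Wp u j = if ks + 1 ≤ j ∧ j + 1 ≤ L
            then What j + Matrix.vecMulVec (u j) (z j) else What j := by rw [hWpdef]
        rw [hWpj]
        by_cases hc : ks + 1 ≤ j ∧ j + 1 ≤ L
        · rw [if_pos hc, add_sub_cancel_left]
          exact hu j
        · rw [if_neg hc, sub_self, frob_zero]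
          linarith
      have hfo : ∀ u, (∀ i, frob (Matrix.vecMulVec (u i) (z i)) ≤ ε/2) → ∀ k, k < L →
          prodSeg d 0 k (Wp u) * (G (prodSeg d 0 L What))ᵀ * prodSeg d (k+1) L (Wp u) = 0 :=
        fun u hu => fo_main hf hε hm (Wp u) (hball u hu) (hWpkeep u L)
      have U : ∀ j, ks + 1 ≤ j → j ≤ L →
          ∀ u : (i : ℕ) → Fin (d (i+1)) → ℝ,
            (∀ i, frob (Matrix.vecMulVec (u i) (z i)) ≤ ε/2) →
          prodSeg d 0 ks What * (G (prodSeg d 0 L What))ᵀ * prodSeg d j L (Wp u) = 0 := by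
        intro j hj
        induction j, hj using Nat.le_induction with
        | base =>
            intro hL' u hu
            have h := hfo u hu ks hksL
            rwa [hWpkeep u ks] at h
        | succ j hj ih =>
            intro hjL u hu
            have hjL' : j ≤ L := by omega
            have hrange : ks + 1 ≤ j ∧ j + 1 ≤ L := ⟨hj, hjL⟩
            have hzj := hz j hrange.1 hrange.2
            apply eq_zero_of_mulVec
            intro v
            have key : ∀ w : Fin (d (j+1)) → ℝ, frob (Matrix.vecMulVec w (z j)) ≤ ε/2 →
                (prodSeg d 0 ks What * (G (prodSeg d 0 L What))ᵀ *
                  prodSeg d (j+1) L (Wp u)) *ᵥ w = 0 := by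
              intro w hw
              set u1 := Function.update u j w with hu1def
              set u0 := Function.update u j (0 : Fin (d (j+1)) → ℝ) with hu0def
              have hsu1 : ∀ i, frob (Matrix.vecMulVec (u1 i) (z i)) ≤ ε/2 := by
                intro i
                by_cases hij : i = j
                · subst hij; rw [hu1def, Function.update_self]; exact hw
                · rw [hu1def, Function.update_of_ne hij]; exact hu i
              have hsu0 : ∀ i, frob (Matrix.vecMulVec (u0 i) (z i)) ≤ ε/2 := by
                intro i
                by_cases hij : i = j
                · subst hij
                  rw [hu0def, Function.update_self, vecMulVec_zero_left, frob_zero]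
                  linarith
                · rw [hu0def, Function.update_of_ne hij]; exact hu i
              have e1 := ih hjL' u1 hsu1
              have e0 := ih hjL' u0 hsu0
              have hcong1 : prodSeg d (j+1) L (Wp u1) = prodSeg d (j+1) L (Wp u) := by
                apply prodSeg_congr hjL
                intro i hi1 hi2
                have w1 : Wp u1 i = if ks + 1 ≤ i ∧ i + 1 ≤ L
                    then What i + Matrix.vecMulVec (u1 i) (z i) else What i := by rw [hWpdef]
                have w2 : Wp u i = if ks + 1 ≤ i ∧ i + 1 ≤ L
                    then What i + Matrix.vecMulVec (u i) (z i) else What i := by rw [hWpdef]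
                rw [w1, w2, hu1def, Function.update_of_ne (by omega)]
              have hcong0 : prodSeg d (j+1) L (Wp u0) = prodSeg d (j+1) L (Wp u) := by
                apply prodSeg_congr hjL
                intro i hi1 hi2
                have w1 : Wp u0 i = if ks + 1 ≤ i ∧ i + 1 ≤ L
                    then What i + Matrix.vecMulVec (u0 i) (z i) else What i := by rw [hWpdef]
                have w2 : Wp u i = if ks + 1 ≤ i ∧ i + 1 ≤ L
                    then What i + Matrix.vecMulVec (u i) (z i) else What i := by rw [hWpdef]
                rw [w1, w2, hu0def, Function.update_of_ne (by omega)]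
              have hd1 : prodSeg d j L (Wp u1)
                  = prodSeg d (j+1) L (Wp u) * (What j + Matrix.vecMulVec w (z j)) := by
                rw [prodSeg_succ_left (show j < L by omega), hcong1]
                congr 1
                have w1 : Wp u1 j = if ks + 1 ≤ j ∧ j + 1 ≤ L
                    then What j + Matrix.vecMulVec (u1 j) (z j) else What j := by rw [hWpdef]
                rw [w1, if_pos hrange, hu1def, Function.update_self]
              have hd0 : prodSeg d j L (Wp u0) = prodSeg d (j+1) L (Wp u) * What j := by
                rw [prodSeg_succ_left (show j < L by omega), hcong0]
                congr 1
                have w1 : Wp u0 j = if ks + 1 ≤ j ∧ j + 1 ≤ L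
                    then What j + Matrix.vecMulVec (u0 j) (z j) else What j := by rw [hWpdef]
                rw [w1, if_pos hrange, hu0def, Function.update_self, vecMulVec_zero_left,
                  add_zero]
              rw [hd1] at e1
              rw [hd0] at e0
              rw [Matrix.mul_add, Matrix.mul_add, e0, zero_add, ← Matrix.mul_assoc] at e1
              rw [Stmt7Aux.mul_vecMulVec] at e1
              exact left_eq_zero_of_vecMulVec e1 hzj.2
            have hFnn := frob_nonneg (Matrix.vecMulVec v (z j))
            have hccpos : 0 < (ε/2) / (frob (Matrix.vecMulVec v (z j)) + 1) :=
              div_pos (by linarith) (by linarith)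
            have hsmall : frob (Matrix.vecMulVec
                (((ε/2) / (frob (Matrix.vecMulVec v (z j)) + 1)) • v) (z j)) ≤ ε/2 := by
              rw [vecMulVec_smul_left, frob_smul, abs_of_pos hccpos]
              rw [div_mul_eq_mul_div, div_le_iff₀ (by linarith)]
              nlinarith
            have hk2 := key _ hsmall
            rw [Matrix.mulVec_smul] at hk2
            rcases smul_eq_zero.mp hk2 with h' | h'
            · exact absurd h' (ne_of_gt hccpos)
            · exact h'
      have hfin := U L (by omega) le_rfl (fun i => 0)
        (fun i => by rw [vecMulVec_zero_left, frob_zero]; linarith)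
      rw [prodSeg_self, Matrix.mul_one] at hfin
      rcases Nat.eq_zero_or_pos ks with hks0 | hkspos
      · rw [hks0, prodSeg_self, Matrix.one_mul] at hfin
        exact Matrix.transpose_eq_zero.mp hfin
      · have hd0 : d 0 ≤ d ks := by
          have h1 := hstruct ks hkspos hksL
          rwa [min_eq_left hcase] at h1
        exact Matrix.transpose_eq_zero.mp
          (cancel_of_rows_indep (prodSeg d 0 ks What) hPks hd0 _ hfin)
    · -- Case 2 : use top partial products
      set Qp : ℕ → Prop :=
        fun mm => ∀ yy : Fin (d mm) → ℝ, prodSeg d mm L What *ᵥ yy = 0 → yy = 0 with hQpdef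
      have hQL : Qp L := by
        intro yy hyy
        rwa [prodSeg_self, Matrix.one_mulVec] at hyy
      have hex : ∃ mm, Qp mm := ⟨L, hQL⟩
      set ms := Nat.find hex with hmsdef
      have hQms : Qp ms := Nat.find_spec hex
      have hmsL : ms ≤ L := Nat.find_min' hex hQL
      rcases Nat.eq_zero_or_pos ms with hms0 | hmspos
      · exfalso
        apply hcase
        rw [hms0] at hQms
        exact card_le_of_cols_indep (prodSeg d 0 L What) hQms
      · obtain ⟨k0, hk0⟩ : ∃ k0, k0 + 1 = ms := ⟨ms - 1, by omega⟩
        have hk0L : k0 < L := by omega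
        have yex : ∀ j, j + 1 ≤ ms →
            ∃ yy : Fin (d j) → ℝ, prodSeg d j L What *ᵥ yy = 0 ∧ yy ≠ 0 := by
          intro j hjm
          have hnQ : ¬ Qp j := Nat.find_min hex (by omega)
          simp only [hQpdef] at hnQ
          push_neg at hnQ
          exact hnQ
        set y : (j : ℕ) → Fin (d j) → ℝ := fun j =>
          if h : j + 1 ≤ ms then (yex j h).choose else 0 with hydef
        have hy : ∀ j, j + 1 ≤ ms → prodSeg d j L What *ᵥ y j = 0 ∧ y j ≠ 0 := by
          intro j hjm
          rw [hydef]
          simp only [dif_pos hjm]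
          exact (yex j hjm).choose_spec
        set Wq : ((i : ℕ) → Fin (d i) → ℝ) →
            (j : ℕ) → Matrix (Fin (d (j+1))) (Fin (d j)) ℝ :=
          fun u j => if j + 2 ≤ ms then What j + Matrix.vecMulVec (y (j+1)) (u j)
            else What j with hWqdef
        have hWqkeep : ∀ u n', ∀ a', a' + n' = L →
            prodSeg d a' L (Wq u) = prodSeg d a' L What := by
          intro u n'
          induction n' with
          | zero =>
              intro a' ha'
              have haL : a' = L := by omega
              subst haL
              rw [prodSeg_self, prodSeg_self]
          | succ n' ih =>
              intro a' ha'
              have haL : a' < L := by omega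
              rw [prodSeg_succ_left haL, prodSeg_succ_left haL, ih (a'+1) (by omega)]
              have wq : Wq u a' = if a' + 2 ≤ ms
                  then What a' + Matrix.vecMulVec (y (a'+1)) (u a') else What a' := by
                rw [hWqdef]
              rw [wq]
              by_cases hc : a' + 2 ≤ ms
              · rw [if_pos hc, Matrix.mul_add, Stmt7Aux.mul_vecMulVec, (hy (a'+1) (by omega)).1,
                  vecMulVec_zero_left, add_zero]
              · rw [if_neg hc]
        have hballq : ∀ u, (∀ i, frob (Matrix.vecMulVec (y (i+1)) (u i)) ≤ ε/2) →
            ∀ j, j < L → frob (Wq u j - What j) ≤ ε/2 := by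
          intro u hu j hj
          have wq : Wq u j = if j + 2 ≤ ms
              then What j + Matrix.vecMulVec (y (j+1)) (u j) else What j := by rw [hWqdef]
          rw [wq]
          by_cases hc : j + 2 ≤ ms
          · rw [if_pos hc, add_sub_cancel_left]
            exact hu j
          · rw [if_neg hc, sub_self, frob_zero]
            linarith
        have hfo2 : ∀ u, (∀ i, frob (Matrix.vecMulVec (y (i+1)) (u i)) ≤ ε/2) →
            prodSeg d 0 k0 (Wq u) * (G (prodSeg d 0 L What))ᵀ * prodSeg d ms L What = 0 := by
          intro u hu
          have h := fo_main hf hε hm (Wq u) (hballq u hu) (hWqkeep u L 0 (by omega)) k0 hk0L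
          rw [hk0] at h
          rwa [hWqkeep u (L - ms) ms (by omega)] at h
        have V : ∀ n', ∀ jj, jj + n' = k0 →
            ∀ u : (i : ℕ) → Fin (d i) → ℝ,
              (∀ i, frob (Matrix.vecMulVec (y (i+1)) (u i)) ≤ ε/2) →
            prodSeg d 0 jj (Wq u) * (G (prodSeg d 0 L What))ᵀ * prodSeg d ms L What = 0 := by
          intro n'
          induction n' with
          | zero =>
              intro jj hjj u hu
              have hjk : jj = k0 := by omega
              subst hjk
              exact hfo2 u hu
          | succ n' ih =>
              intro jj hjj u hu
              have hjrange : jj + 2 ≤ ms := by omega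
              have hyj := hy (jj+1) (by omega)
              apply eq_zero_of_vecMul
              intro v
              have key : ∀ w : Fin (d jj) → ℝ,
                  frob (Matrix.vecMulVec (y (jj+1)) w) ≤ ε/2 →
                  w ᵥ* (prodSeg d 0 jj (Wq u) * (G (prodSeg d 0 L What))ᵀ *
                    prodSeg d ms L What) = 0 := by
                intro w hw
                set u1 := Function.update u jj w with hu1def
                set u0 := Function.update u jj (0 : Fin (d jj) → ℝ) with hu0def
                have hsu1 : ∀ i, frob (Matrix.vecMulVec (y (i+1)) (u1 i)) ≤ ε/2 := by
                  intro i
                  by_cases hij : i = jj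
                  · subst hij; rw [hu1def, Function.update_self]; exact hw
                  · rw [hu1def, Function.update_of_ne hij]; exact hu i
                have hsu0 : ∀ i, frob (Matrix.vecMulVec (y (i+1)) (u0 i)) ≤ ε/2 := by
                  intro i
                  by_cases hij : i = jj
                  · subst hij
                    rw [hu0def, Function.update_self, vecMulVec_zero_right, frob_zero]
                    linarith
                  · rw [hu0def, Function.update_of_ne hij]; exact hu i
                have e1 := ih (jj+1) (by omega) u1 hsu1
                have e0 := ih (jj+1) (by omega) u0 hsu0
                have hcong1 : prodSeg d 0 jj (Wq u1) = prodSeg d 0 jj (Wq u) := by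
                  apply prodSeg_congr (Nat.zero_le _)
                  intro i hi1 hi2
                  have w1 : Wq u1 i = if i + 2 ≤ ms
                      then What i + Matrix.vecMulVec (y (i+1)) (u1 i) else What i := by
                    rw [hWqdef]
                  have w2 : Wq u i = if i + 2 ≤ ms
                      then What i + Matrix.vecMulVec (y (i+1)) (u i) else What i := by
                    rw [hWqdef]
                  rw [w1, w2, hu1def, Function.update_of_ne (by omega)]
                have hcong0 : prodSeg d 0 jj (Wq u0) = prodSeg d 0 jj (Wq u) := by
                  apply prodSeg_congr (Nat.zero_le _)
                  intro i hi1 hi2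
                  have w1 : Wq u0 i = if i + 2 ≤ ms
                      then What i + Matrix.vecMulVec (y (i+1)) (u0 i) else What i := by
                    rw [hWqdef]
                  have w2 : Wq u i = if i + 2 ≤ ms
                      then What i + Matrix.vecMulVec (y (i+1)) (u i) else What i := by
                    rw [hWqdef]
                  rw [w1, w2, hu0def, Function.update_of_ne (by omega)]
                have hd1 : prodSeg d 0 (jj+1) (Wq u1)
                    = (What jj + Matrix.vecMulVec (y (jj+1)) w) * prodSeg d 0 jj (Wq u) := by
                  rw [prodSeg_succ (Nat.zero_le _), hcong1]
                  congr 1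
                  have w1 : Wq u1 jj = if jj + 2 ≤ ms
                      then What jj + Matrix.vecMulVec (y (jj+1)) (u1 jj) else What jj := by
                    rw [hWqdef]
                  rw [w1, if_pos hjrange, hu1def, Function.update_self]
                have hd0 : prodSeg d 0 (jj+1) (Wq u0) = What jj * prodSeg d 0 jj (Wq u) := by
                  rw [prodSeg_succ (Nat.zero_le _), hcong0]
                  congr 1
                  have w1 : Wq u0 jj = if jj + 2 ≤ ms
                      then What jj + Matrix.vecMulVec (y (jj+1)) (u0 jj) else What jj := by
                    rw [hWqdef]
                  rw [w1, if_pos hjrange, hu0def, Function.update_self, vecMulVec_zero_right,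
                    add_zero]
                rw [hd1] at e1
                rw [hd0] at e0
                rw [Matrix.add_mul, Matrix.add_mul, Matrix.add_mul, e0, zero_add] at e1
                simp only [Matrix.mul_assoc] at e1 ⊢
                rw [Stmt7Aux.vecMulVec_mul] at e1
                exact right_eq_zero_of_vecMulVec e1 hyj.2
              have hFnn := frob_nonneg (Matrix.vecMulVec (y (jj+1)) v)
              have hccpos : 0 < (ε/2) / (frob (Matrix.vecMulVec (y (jj+1)) v) + 1) :=
                div_pos (by linarith) (by linarith)
              have hsmall : frob (Matrix.vecMulVec (y (jj+1))
                  (((ε/2) / (frob (Matrix.vecMulVec (y (jj+1)) v) + 1)) • v)) ≤ ε/2 := by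
                rw [vecMulVec_smul_right, frob_smul, abs_of_pos hccpos]
                rw [div_mul_eq_mul_div, div_le_iff₀ (by linarith)]
                nlinarith
              have hk2 := key _ hsmall
              rw [Matrix.smul_vecMul] at hk2
              rcases smul_eq_zero.mp hk2 with h' | h'
              · exact absurd h' (ne_of_gt hccpos)
              · exact h'
        have hfin := V k0 0 (by omega) (fun i => 0)
          (fun i => by rw [vecMulVec_zero_right, frob_zero]; linarith)
        rw [prodSeg_self, Matrix.one_mul] at hfin
        rcases eq_or_lt_of_le hmsL with hmsL' | hmsL'
        · rw [hmsL', prodSeg_self, Matrix.mul_one] at hfin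
          exact Matrix.transpose_eq_zero.mp hfin
        · have hdL : d L ≤ d ms := by
            have h1 := hstruct ms hmspos hmsL'
            rwa [min_eq_right (le_of_not_ge hcase)] at h1
          exact Matrix.transpose_eq_zero.mp
            (cancel_of_cols_indep (prodSeg d ms L What) hQms hdL _ hfin)
  intro W
  rw [prodUpTo_eq, prodUpTo_eq]
  have hgrad0 : HasGradAt f (prodSeg d 0 L What) 0 := by
    have h := hf (prodSeg d 0 L What)
    rwa [hG0] at h
  exact global_of_grad_zero hconv hgrad0 _
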